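/- Let b ∈ (0,1), c > 1, and let (p_t)_{t ∈ S} be a finite nonempty family of structural-position modal probabilities with b < p_t and 1/2 < p_t < 1 for every t. Let p_safe ∈ (max(1/2,b), 1) satisfy p_safe ≥ p_t for all t. If λ < λ*(p_safe, b, c), then every structural position is clip-safe: for every t ∈ S, the sharpened probability formed from p_t satisfies p_λ^{(b)}(p_t) < 1 − (1−p_t)/c. -/

import Mathlib

open Real

/-- Base-relative sharpened probability `p_λ^{(b)}` at a position with teacher modal
probability `p`. -/
noncomputable def pLam (p b lam : ℝ) : ℝ :=
  (b ^ (1 - lam) * p ^ lam) / (b ^ (1 - lam) * p ^ lam + (1 - b) ^ (1 - lam) * (1 - p) ^ lam)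

/-- Closed-form clip-safe threshold `λ*(p,b,c)`. -/
noncomputable def lamStar (p b c : ℝ) : ℝ :=
  (Real.log ((1 - p) / (c - 1 + p)) - Real.log ((1 - b) / b)) /
    (Real.log ((1 - p) / p) - Real.log ((1 - b) / b))

/-!
Sharpening is linear in log-odds: `logOdds (p_λ^{(b)}(p)) = (1 - λ) logOdds b + λ logOdds p`.
Since `logOdds (q_c(p)) - logOdds p = log ((c - 1 + p) / p)`, clip-safety at `p` is equivalent to
`λ < λ*(p, b, c) = 1 + log ((c - 1 + p) / p) / (logOdds p - logOdds b)`, and this threshold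
decreases in `p` (numerator decreasing, denominator increasing). So `λ < λ*(p_safe, b, c)`
gives `λ < λ*(p_t, b, c)` at every position with `p_t ≤ p_safe`.
-/

noncomputable def logOdds (x : ℝ) : ℝ := Real.log (x / (1 - x))

lemma logOdds_strictMonoOn : StrictMonoOn logOdds (Set.Ioo 0 1) := by
  rintro x ⟨hx0, hx1⟩ y ⟨-, hy1⟩ hxy
  refine Real.log_lt_log (div_pos hx0 (sub_pos.mpr hx1)) ?_
  rw [div_lt_div_iff₀ (sub_pos.mpr hx1) (sub_pos.mpr hy1)]
  nlinarith

lemma logOdds_lt_logOdds {x y : ℝ} (hx : 0 < x) (hxy : x < y) (hy : y < 1) :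
    logOdds x < logOdds y :=
  logOdds_strictMonoOn ⟨hx, hxy.trans hy⟩ ⟨hx.trans hxy, hy⟩ hxy

lemma log_div_one_sub_eq_neg_logOdds {x : ℝ} : Real.log ((1 - x) / x) = -logOdds x := by
  rw [logOdds, ← Real.log_inv, inv_div]

lemma div_add_lt_iff_div_lt_div_one_sub {X Y q : ℝ} (hX : 0 < X) (hY : 0 < Y) (hq : q < 1) :
    X / (X + Y) < q ↔ X / Y < q / (1 - q) := by
  rw [div_lt_iff₀ (by linarith), div_lt_div_iff₀ hY (by linarith)]
  constructor <;> intro h <;> nlinarith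

lemma log_rpow_mul_rpow {x y : ℝ} (hx : 0 < x) (hy : 0 < y) (t : ℝ) :
    Real.log (x ^ (1 - t) * y ^ t) = (1 - t) * Real.log x + t * Real.log y := by
  rw [Real.log_mul (Real.rpow_pos_of_pos hx _).ne' (Real.rpow_pos_of_pos hy _).ne',
    Real.log_rpow hx, Real.log_rpow hy]

lemma pLam_lt_iff {p b q : ℝ} (lam : ℝ) (hp0 : 0 < p) (hp1 : p < 1) (hb0 : 0 < b) (hb1 : b < 1)
    (hq0 : 0 < q) (hq1 : q < 1) :
    pLam p b lam < q ↔ (1 - lam) * logOdds b + lam * logOdds p < logOdds q := by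
  have hX : 0 < b ^ (1 - lam) * p ^ lam :=
    mul_pos (Real.rpow_pos_of_pos hb0 _) (Real.rpow_pos_of_pos hp0 _)
  have hY : 0 < (1 - b) ^ (1 - lam) * (1 - p) ^ lam :=
    mul_pos (Real.rpow_pos_of_pos (sub_pos.mpr hb1) _) (Real.rpow_pos_of_pos (sub_pos.mpr hp1) _)
  have hlog_odds : Real.log (b ^ (1 - lam) * p ^ lam / ((1 - b) ^ (1 - lam) * (1 - p) ^ lam)) =
      (1 - lam) * logOdds b + lam * logOdds p := by
    rw [Real.log_div hX.ne' hY.ne', log_rpow_mul_rpow hb0 hp0,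
      log_rpow_mul_rpow (sub_pos.mpr hb1) (sub_pos.mpr hp1), logOdds, logOdds,
      Real.log_div hb0.ne' (by linarith), Real.log_div hp0.ne' (by linarith)]
    ring
  rw [pLam, div_add_lt_iff_div_lt_div_one_sub hX hY hq1, ← hlog_odds, logOdds]
  exact (Real.log_lt_log_iff (div_pos hX hY) (div_pos hq0 (by linarith))).symm

lemma logOdds_one_sub_div {p c : ℝ} (hc : 0 < c) :
    logOdds (1 - (1 - p) / c) = Real.log ((c - 1 + p) / (1 - p)) := by
  rw [logOdds]
  congr 1
  field_simp
  ring

lemma lamStar_eq {p b c : ℝ} (hc : 0 < c) :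
    lamStar p b c = (logOdds (1 - (1 - p) / c) - logOdds b) / (logOdds p - logOdds b) := by
  have hflip : Real.log ((1 - p) / (c - 1 + p)) = -Real.log ((c - 1 + p) / (1 - p)) := by
    rw [← Real.log_inv, inv_div]
  rw [lamStar, hflip, log_div_one_sub_eq_neg_logOdds, log_div_one_sub_eq_neg_logOdds,
    logOdds_one_sub_div hc, ← neg_div_neg_eq]
  congr 1 <;> ring

theorem pLam_lt_one_sub_div_iff {p b c : ℝ} (lam : ℝ) (hb0 : 0 < b) (hb1 : b < 1) (hbp : b < p)
    (hp1 : p < 1) (hc : 1 ≤ c) :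
    pLam p b lam < 1 - (1 - p) / c ↔ lam < lamStar p b c := by
  have hq0 : 0 < 1 - (1 - p) / c := by
    rw [sub_pos, div_lt_one (by linarith)]
    linarith
  have hq1 : 1 - (1 - p) / c < 1 := by
    have : 0 < (1 - p) / c := div_pos (by linarith) (by linarith)
    linarith
  have hgap : 0 < logOdds p - logOdds b := sub_pos.mpr (logOdds_lt_logOdds hb0 hbp hp1)
  rw [pLam_lt_iff lam (by linarith) hp1 hb0 hb1 hq0 hq1, lamStar_eq (by linarith),
    lt_div_iff₀ hgap]
  constructor <;> intro h <;> linarith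

lemma lamStar_eq_one_add {p b c : ℝ} (hb0 : 0 < b) (hbp : b < p) (hp1 : p < 1) (hc : 1 ≤ c) :
    lamStar p b c = 1 + Real.log ((c - 1 + p) / p) / (logOdds p - logOdds b) := by
  have hgap : 0 < logOdds p - logOdds b := sub_pos.mpr (logOdds_lt_logOdds hb0 hbp hp1)
  have hp0 : 0 < p := hb0.trans hbp
  have hcp : 0 < c - 1 + p := by linarith
  have hnum : logOdds (1 - (1 - p) / c) - logOdds b =
      Real.log ((c - 1 + p) / p) + (logOdds p - logOdds b) := by
    rw [logOdds_one_sub_div (by linarith)]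
    simp only [logOdds]
    rw [Real.log_div hcp.ne' (by linarith),
      Real.log_div hcp.ne' hp0.ne', Real.log_div hp0.ne' (by linarith)]
    ring
  rw [lamStar_eq (by linarith), hnum, add_div, div_self hgap.ne']
  ring

lemma lamStar_le_lamStar {p p' b c : ℝ} (hb0 : 0 < b) (hbp : b < p) (hpp' : p ≤ p')
    (hp'1 : p' < 1) (hc : 1 ≤ c) : lamStar p' b c ≤ lamStar p b c := by
  have hp0 : 0 < p := hb0.trans hbp
  have hp'0 : 0 < p' := hp0.trans_le hpp'
  rw [lamStar_eq_one_add hb0 hbp (hpp'.trans_lt hp'1) hc,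
    lamStar_eq_one_add hb0 (hbp.trans_le hpp') hp'1 hc, add_le_add_iff_left]
  have hnum_nonneg : 0 ≤ Real.log ((c - 1 + p) / p) :=
    Real.log_nonneg ((one_le_div hp0).mpr (by linarith))
  have hnum_anti : Real.log ((c - 1 + p') / p') ≤ Real.log ((c - 1 + p) / p) := by
    refine Real.log_le_log (div_pos (by linarith) hp'0) ?_
    rw [div_le_div_iff₀ hp'0 hp0]
    nlinarith
  have hden_pos : 0 < logOdds p - logOdds b :=
    sub_pos.mpr (logOdds_lt_logOdds hb0 hbp (hpp'.trans_lt hp'1))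
  have hden_mono : logOdds p - logOdds b ≤ logOdds p' - logOdds b :=
    sub_le_sub_right
      ((logOdds_strictMonoOn.le_iff_le ⟨hp0, hpp'.trans_lt hp'1⟩ ⟨hp'0, hp'1⟩).mpr hpp') _
  exact div_le_div₀ hnum_nonneg hnum_anti hden_pos hden_mono

theorem sequence_level_safety_general
    {S : Type*}
    (b c : ℝ) (hb0 : 0 < b) (hb1 : b < 1) (hc : 1 < c)
    (pt : S → ℝ)
    (hpt : ∀ t, b < pt t ∧ 1 / 2 < pt t ∧ pt t < 1)
    (pSafe : ℝ) (hps : pSafe ∈ Set.Ioo (max (1 / 2) b) 1)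
    (hbound : ∀ t, pt t ≤ pSafe)
    (lam : ℝ) (hlam : lam < lamStar pSafe b c) :
    ∀ t, pLam (pt t) b lam < 1 - (1 - pt t) / c := by
  intro t
  obtain ⟨hbp, -, hp1⟩ := hpt t
  have hthreshold : lamStar pSafe b c ≤ lamStar (pt t) b c :=
    lamStar_le_lamStar hb0 hbp (hbound t) hps.2 hc.le
  exact (pLam_lt_one_sub_div_iff lam hb0 hb1 hbp hp1 hc.le).mpr (hlam.trans_le hthreshold)

/-- sequence-level provable safety: if `p_safe` upper-bounds every
structural-position modal probability and `λ < λ*(p_safe, b, c)`, then every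
structural position is clip-safe: `p_λ^{(b)}(p_t) < 1 − (1−p_t)/c` for all `t`. -/
theorem sequence_level_safety
    {S : Type*} [Fintype S] [Nonempty S]
    (b c : ℝ) (hb0 : 0 < b) (hb1 : b < 1) (hc : 1 < c)
    (pt : S → ℝ)
    (hpt : ∀ t, b < pt t ∧ 1 / 2 < pt t ∧ pt t < 1)
    (pSafe : ℝ) (hps : pSafe ∈ Set.Ioo (max (1 / 2) b) 1)
    (hbound : ∀ t, pt t ≤ pSafe)
    (lam : ℝ) (hlam : lam < lamStar pSafe b c) :
    ∀ t, pLam (pt t) b lam < 1 - (1 - pt t) / c :=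
  sequence_level_safety_general b c hb0 hb1 hc pt hpt pSafe hps hbound lam hlam
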